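/- Let E be a connected directed graph and A = KE its path algebra over a field K. If E is a cycle C_n, then the centroid C(A) is isomorphic to the polynomial algebra K[x]; otherwise C(A) = K·Id_A. -/

import Mathlib

/-- A directed graph: vertices, edges, source and range maps. -/
structure DGraph : Type 1 where
  V : Type
  Edge : Type
  s : Edge → V
  r : Edge → V

namespace DGraph

/-- A list of edges is composable if consecutive edges match up. -/
def IsComposable (G : DGraph) (l : List G.Edge) : Prop :=
  l.Chain' (fun e f => G.r e = G.s f)

/-- A path in `G`: either a trivial path at a vertex, or a nonempty composable list of edges. -/
def GPath (G : DGraph) : Type :=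
  G.V ⊕ {l : List G.Edge // l ≠ [] ∧ G.IsComposable l}

namespace GPath

variable {G : DGraph}

/-- The source of a path. -/
def src : GPath G → G.V
  | Sum.inl v => v
  | Sum.inr l => G.s (l.1.head l.2.1)

/-- The range of a path. -/
def rng : GPath G → G.V
  | Sum.inl v => v
  | Sum.inr l => G.r (l.1.getLast l.2.1)

/-- The length of a path. -/
def length : GPath G → ℕ
  | Sum.inl _ => 0
  | Sum.inr l => l.1.length

/-- The trivial path at a vertex. -/
def ofVertex (v : G.V) : GPath G := Sum.inl v

/-- The length-one path given by an edge. -/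
def ofEdge (e : G.Edge) : GPath G :=
  Sum.inr ⟨[e], by refine ⟨by simp, ?_⟩; exact List.isChain_singleton _⟩

/-- Concatenation of composable paths. -/
def comp : (p q : GPath G) → p.rng = q.src → GPath G
  | Sum.inl _, q, _ => q
  | Sum.inr l, Sum.inl _, _ => Sum.inr l
  | Sum.inr l, Sum.inr m, h => Sum.inr ⟨l.1 ++ m.1, by
      refine ⟨by simp [l.2.1], l.2.2.append m.2.2 ?_⟩
      intro x hx y hy
      rw [List.getLast?_eq_some_getLast l.2.1] at hx
      rw [List.head?_eq_head m.2.1] at hy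
      cases hx
      cases hy
      exact h⟩

end GPath

end DGraph

open DGraph

/-- A realization of the path algebra of the graph `G` over the field `K`:
a `K`-algebra with a basis indexed by the paths of `G`, multiplying by concatenation. -/
structure PathAlgebraOn (K : Type) [Field K] (G : DGraph) (A : Type)
    [NonUnitalRing A] [Module K A] where
  basis : Module.Basis (GPath G) K A
  mul_comp : ∀ (p q : GPath G) (h : p.rng = q.src),
      basis p * basis q = basis (p.comp q h)
  mul_ncomp : ∀ p q : GPath G, p.rng ≠ q.src → basis p * basis q = 0

/-- Adjacency in the underlying undirected graph. -/
def DGraph.Adj (G : DGraph) (u v : G.V) : Prop :=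
  ∃ e : G.Edge, (G.s e = u ∧ G.r e = v) ∨ (G.s e = v ∧ G.r e = u)

/-- A graph is connected if its underlying undirected graph is connected. -/
def DGraph.Connected (G : DGraph) : Prop :=
  ∀ u v : G.V, Relation.ReflTransGen G.Adj u v

/-- `G` is (isomorphic to) the cycle graph `Cₙ` for some `n ≥ 1`. -/
def DGraph.IsCycleGraph (G : DGraph) : Prop :=
  ∃ (n : ℕ) (hn : 0 < n) (φV : G.V ≃ Fin n) (φE : G.Edge ≃ Fin n),
    (∀ e : G.Edge, φV (G.s e) = φE e) ∧
    (∀ e : G.Edge, φV (G.r e) = ⟨((φE e : ℕ) + 1) % n, Nat.mod_lt _ hn⟩)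

/-- The centroid of `A`: the `K`-linear maps `T` with `T(xy) = T(x)y = xT(y)`. -/
def centroidSet (K : Type) [Field K] (A : Type) [NonUnitalRing A] [Module K A] :
    Set (A →ₗ[K] A) :=
  {T | ∀ x y : A, T (x * y) = T x * y ∧ T (x * y) = x * T y}

/-! A centroid element `T` is determined by its values `T (b u)` at the vertices, and each
`T (b u)` is a combination of closed paths at `u`. The identity
`T (b (s e)) * b e = b e * T (b (r e))` transports coefficients along every edge `e`, so on a
connected graph the coefficient of the trivial path is a constant `k`. Either `T = k • id`, or
every `T (b u) - k • b u` has a nontrivial closed path at `u` in its support; that path must start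
with every edge leaving `u` and end with every edge entering `u`, which forces `s` and `r` to be
bijective and the graph to be a cycle. On the cycle `Cₙ` the closed paths at `u` are the `k`-fold
loops, and `T` is the polynomial in the shift "append one loop" whose `k`-th coefficient is the
(constant) coefficient of the `k`-fold loop. -/

namespace DGraph.GPath

variable {G : DGraph}

def edges : GPath G → List G.Edge
  | Sum.inl _ => []
  | Sum.inr l => l.1

@[simp] theorem edges_ofEdge (e : G.Edge) : (ofEdge e).edges = [e] := rfl

@[simp] theorem src_ofVertex (v : G.V) : (ofVertex v).src = v := rfl

@[simp] theorem src_ofEdge (e : G.Edge) : (ofEdge e).src = G.s e := rfl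

@[simp] theorem rng_ofEdge (e : G.Edge) : (ofEdge e).rng = G.r e := rfl

@[simp] theorem length_ofVertex (v : G.V) : (ofVertex v).length = 0 := rfl

@[simp] theorem length_ofEdge (e : G.Edge) : (ofEdge e).length = 1 := rfl

theorem length_eq_length_edges (p : GPath G) : p.length = p.edges.length := by
  rcases p with _ | _ <;> rfl

@[simp] theorem edges_comp (p q : GPath G) (h : p.rng = q.src) :
    (p.comp q h).edges = p.edges ++ q.edges := by
  rcases p with _ | _ <;> rcases q with _ | _ <;> simp [comp, edges]

@[simp] theorem src_comp (p q : GPath G) (h : p.rng = q.src) : (p.comp q h).src = p.src := by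
  rcases p with v | l
  · exact h.symm
  · rcases q with _ | m
    · rfl
    · exact congrArg G.s (List.head_append_of_ne_nil _)

@[simp] theorem rng_comp (p q : GPath G) (h : p.rng = q.src) : (p.comp q h).rng = q.rng := by
  rcases p with _ | l
  · rfl
  · rcases q with _ | m
    · exact h
    · exact congrArg G.r (List.getLast_append_of_ne_nil _ m.2.1)

@[simp] theorem length_comp (p q : GPath G) (h : p.rng = q.src) :
    (p.comp q h).length = p.length + q.length := by
  simp [length_eq_length_edges]

theorem ext_src_edges {p q : GPath G} (hs : p.src = q.src) (he : p.edges = q.edges) : p = q := by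
  rcases p with v | ⟨l, hl, _⟩ <;> rcases q with w | ⟨m, hm, _⟩
  · exact congrArg Sum.inl hs
  · exact absurd he.symm hm
  · exact absurd he hl
  · exact congrArg Sum.inr (Subtype.ext he)

theorem eq_ofVertex_of_edges_eq_nil {p : GPath G} (h : p.edges = []) : p = ofVertex p.src :=
  ext_src_edges rfl h

theorem comp_left_cancel {p p' q : GPath G} {h : p.rng = q.src} {h' : p'.rng = q.src}
    (heq : p.comp q h = p'.comp q h') : p = p' := by
  refine ext_src_edges ?_ (List.append_cancel_right (bs := q.edges) ?_)
  · simpa using congrArg src heq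
  · simpa using congrArg edges heq

theorem comp_right_cancel {p q q' : GPath G} {h : p.rng = q.src} {h' : p.rng = q'.src}
    (heq : p.comp q h = p.comp q' h') : q = q' :=
  ext_src_edges (h.symm.trans h')
    (List.append_cancel_left (as := p.edges) (by simpa using congrArg edges heq))

theorem src_eq_of_head?_edges {p : GPath G} {e : G.Edge} (h : p.edges.head? = some e) :
    G.s e = p.src := by
  rcases p with _ | ⟨l, hl, _⟩
  · cases h
  · change l.head? = some e at h
    rw [List.head?_eq_some_head hl] at h
    cases h
    rfl

theorem rng_eq_of_getLast?_edges {p : GPath G} {e : G.Edge} (h : p.edges.getLast? = some e) :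
    G.r e = p.rng := by
  rcases p with _ | ⟨l, hl, _⟩
  · cases h
  · change l.getLast? = some e at h
    rw [List.getLast?_eq_some_getLast hl] at h
    cases h
    rfl

@[elab_as_elim]
theorem cons_induction {motive : GPath G → Prop} (vertex : ∀ v, motive (ofVertex v))
    (cons : ∀ e (p : GPath G) (h : (ofEdge e).rng = p.src), motive p → motive ((ofEdge e).comp p h))
    (p : GPath G) : motive p := by
  rcases p with v | ⟨l, hl, hc⟩
  · exact vertex v
  induction l with
  | nil => exact absurd rfl hl
  | cons a t ih =>
    rcases t with _ | ⟨b, t⟩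
    · exact cons a (ofVertex (G.r a)) rfl (vertex _)
    · have hc' := List.isChain_cons_cons.mp hc
      exact cons a (Sum.inr ⟨b :: t, by simp, hc'.2⟩) hc'.1 (ih (by simp) hc'.2)

theorem eq_of_src_eq_of_length_eq (hs : Function.Injective G.s) {p q : GPath G}
    (hsrc : p.src = q.src) (hlen : p.length = q.length) : p = q := by
  induction p using cons_induction generalizing q with
  | vertex v =>
    cases q using cons_induction with
    | vertex w => exact congrArg ofVertex hsrc
    | cons e q h _ => simp at hlen; omega
  | cons e p h ih =>
    cases q using cons_induction with
    | vertex w => simp at hlen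
    | cons e' q h' _ =>
      simp only [src_comp, src_ofEdge, length_comp, length_ofEdge] at hsrc hlen
      obtain rfl : e = e' := hs (by simpa using hsrc)
      obtain rfl : p = q := ih (h.symm.trans h') (by simpa using hlen)
      rfl

theorem exists_src_eq_length_eq (hs : Function.Surjective G.s) (v : G.V) (m : ℕ) :
    ∃ p : GPath G, p.src = v ∧ p.length = m := by
  induction m generalizing v with
  | zero => exact ⟨ofVertex v, rfl, rfl⟩
  | succ m ih =>
    obtain ⟨e, rfl⟩ := hs v
    obtain ⟨p, hp, hlen⟩ := ih (G.r e)
    have h : (ofEdge e).rng = p.src := hp.symm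
    exact ⟨(ofEdge e).comp p h, src_comp .., by simp [hlen, add_comm]⟩

end DGraph.GPath

namespace DGraph

open GPath Function

variable {G : DGraph}

theorem Connected.apply_eq {α : Sort*} (hG : G.Connected) (f : G.V → α)
    (hf : ∀ e, f (G.s e) = f (G.r e)) (u v : G.V) : f u = f v := by
  induction hG u v with
  | refl => rfl
  | tail _ hadj ih =>
    obtain ⟨e, ⟨rfl, rfl⟩ | ⟨rfl, rfl⟩⟩ := hadj
    exacts [ih.trans (hf e), ih.trans (hf e).symm]

theorem rng_eq_iterate {σ : G.V → G.V} (hσ : ∀ e, σ (G.s e) = G.r e) (p : GPath G) :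
    p.rng = σ^[p.length] p.src := by
  induction p using cons_induction with
  | vertex v => rfl
  | cons e p h ih =>
    rw [rng_comp, ih, ← h, rng_ofEdge, ← hσ, length_comp, length_ofEdge, add_comm,
      iterate_succ_apply, src_comp, src_ofEdge]

/-- With `s` and `r` bijective, `σ = r ∘ s⁻¹` is a permutation of the vertices whose orbits are
the connected components; a closed path makes the orbit of its base point finite. -/
theorem isCycleGraph_of_bijective (hconn : G.Connected) (hs : Bijective G.s)
    (hr : Bijective G.r) {p : GPath G} (hp : p.rng = p.src) (hlen : p.length ≠ 0) :
    G.IsCycleGraph := by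
  let σ : Equiv.Perm G.V := (Equiv.ofBijective _ hs).symm.trans (Equiv.ofBijective _ hr)
  have hσ : ∀ e, σ (G.s e) = G.r e := fun e => by simp [σ]
  set u := p.src
  set n := minimalPeriod σ u
  have hn : 0 < n :=
    IsPeriodicPt.minimalPeriod_pos (Nat.pos_of_ne_zero hlen) ((rng_eq_iterate hσ p).symm.trans hp)
  have horbit : ∀ v, ∃ i, σ^[i] u = v := by
    refine fun v => hconn.apply_eq (fun v => ∃ i, σ^[i] u = v) (fun e => propext ?_) u v ▸ ⟨0, rfl⟩
    constructor
    · rintro ⟨i, hi⟩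
      exact ⟨i + 1, by rw [iterate_succ_apply', hi, hσ]⟩
    · rintro ⟨i, hi⟩
      refine ⟨i + n - 1, σ.injective ?_⟩
      rw [← iterate_succ_apply' σ, Nat.succ_eq_add_one, Nat.sub_add_cancel (by omega),
        iterate_add_apply, iterate_minimalPeriod, hi, hσ]
  let φ : Fin n → G.V := fun i => σ^[i] u
  have hφ : Bijective φ := by
    refine ⟨fun i j hij => Fin.ext (iterate_injOn_Iio_minimalPeriod i.2 j.2 hij), fun v => ?_⟩
    obtain ⟨i, rfl⟩ := horbit v
    exact ⟨⟨i % n, Nat.mod_lt _ hn⟩, iterate_mod_minimalPeriod_eq⟩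
  let φV : G.V ≃ Fin n := (Equiv.ofBijective φ hφ).symm
  refine ⟨n, hn, φV, (Equiv.ofBijective _ hs).trans φV, fun e => rfl, fun e => ?_⟩
  rw [Equiv.symm_apply_eq]
  change G.r e = σ^[((φV (G.s e) : ℕ) + 1) % n] u
  rw [iterate_mod_minimalPeriod_eq, iterate_succ_apply', ← hσ]
  exact congrArg σ (Equiv.ofBijective_apply_symm_apply φ hφ (G.s e)).symm

namespace IsCycleGraph

variable (hG : G.IsCycleGraph)
include hG

theorem nonempty : Nonempty G.V := by
  obtain ⟨n, hn, φV, -⟩ := hG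
  exact ⟨φV.symm ⟨0, hn⟩⟩

theorem bijective_s : Bijective G.s := by
  obtain ⟨n, hn, φV, φE, hsφ, -⟩ := hG
  have : G.s = φV.symm ∘ φE := funext fun e => (φV.symm_apply_eq.mpr (hsφ e).symm).symm
  rw [this]
  exact φV.symm.bijective.comp φE.bijective

theorem exists_rng_eq_src_iff :
    ∃ n, 0 < n ∧ ∀ p : GPath G, p.rng = p.src ↔ n ∣ p.length := by
  obtain ⟨n, hn, φV, φE, hsφ, hrφ⟩ := hG
  have hmod : ∀ p : GPath G, (φV p.rng : ℕ) ≡ φV p.src + p.length [MOD n] := by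
    intro p
    induction p using cons_induction with
    | vertex v => rfl
    | cons e p h ih =>
      have hr : (φV (G.r e) : ℕ) ≡ φV (G.s e) + 1 [MOD n] := by
        rw [hrφ, hsφ]
        exact Nat.mod_modEq _ _
      rw [rng_comp, src_comp, src_ofEdge, length_comp, length_ofEdge, ← add_assoc]
      exact ih.trans ((h ▸ hr : (φV p.src : ℕ) ≡ _ [MOD n]).add_right _)
  refine ⟨n, hn, fun p => ?_⟩
  calc p.rng = p.src ↔ (φV p.rng : ℕ) ≡ φV p.src [MOD n] := by
        rw [Nat.ModEq, Nat.mod_eq_of_lt (φV _).2, Nat.mod_eq_of_lt (φV _).2, Fin.val_inj,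
          φV.injective.eq_iff]
    _ ↔ φV p.src + p.length ≡ φV p.src + 0 [MOD n] := ⟨(hmod p).symm.trans, (hmod p).trans⟩
    _ ↔ n ∣ p.length := ⟨fun h => Nat.modEq_zero_iff_dvd.mp (h.add_left_cancel' _),
        fun h => (Nat.modEq_zero_iff_dvd.mpr h).add_left _⟩

end IsCycleGraph

end DGraph

open DGraph GPath Module

section Centroid

variable (K : Type) [Field K] (A : Type) [NonUnitalRing A] [Module K A] [SMulCommClass K A A]
  [IsScalarTower K A A]

def centroidSubalgebra : Subalgebra K (Module.End K A) where
  carrier := centroidSet K A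
  mul_mem' hS hT x y := by
    simp only [Module.End.mul_apply]
    exact ⟨by rw [(hT x y).1, (hS _ y).1], by rw [(hT x y).2, (hS x _).2]⟩
  add_mem' hS hT x y := by
    simp only [LinearMap.add_apply]
    exact ⟨by rw [(hS x y).1, (hT x y).1, add_mul], by rw [(hS x y).2, (hT x y).2, mul_add]⟩
  algebraMap_mem' k x y := by simp [smul_mul_assoc, mul_smul_comm]

variable {K A}

theorem mem_centroidSet_of_basis {ι : Type*} (b : Basis ι K A) {T : A →ₗ[K] A}
    (h : ∀ i j, T (b i * b j) = T (b i) * b j ∧ T (b i * b j) = b i * T (b j)) :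
    T ∈ centroidSet K A := by
  have hl : (LinearMap.mul K A).compr₂ T = LinearMap.mul K A ∘ₗ T :=
    LinearMap.ext_basis b b fun i j => (h i j).1
  have hr : (LinearMap.mul K A).compr₂ T = (LinearMap.mul K A).compl₂ T :=
    LinearMap.ext_basis b b fun i j => (h i j).2
  exact fun x y => ⟨LinearMap.congr_fun₂ hl x y, LinearMap.congr_fun₂ hr x y⟩

end Centroid

namespace PathAlgebraOn

variable {K : Type} [Field K] {G : DGraph} {A : Type} [NonUnitalRing A] [Module K A]
  (PA : PathAlgebraOn K G A) {T T' : A →ₗ[K] A}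

theorem repr_basis_mul_comp [SMulCommClass K A A] (q d : GPath G) (h : q.rng = d.src) (y : A) :
    PA.basis.repr (PA.basis q * y) (q.comp d h) = PA.basis.repr y d := by
  classical
  suffices Finsupp.lapply (q.comp d h) ∘ₗ PA.basis.repr.toLinearMap ∘ₗ
      LinearMap.mulLeft K (PA.basis q) = Finsupp.lapply d ∘ₗ PA.basis.repr.toLinearMap from
    LinearMap.congr_fun this y
  refine PA.basis.ext fun d' => ?_
  simp only [LinearMap.comp_apply, LinearMap.mulLeft_apply, LinearEquiv.coe_coe,
    Finsupp.lapply_apply, Basis.repr_self, Finsupp.single_apply]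
  by_cases hd' : q.rng = d'.src
  · rw [PA.mul_comp _ _ hd', Basis.repr_self, Finsupp.single_apply]
    exact if_congr ⟨comp_right_cancel, fun h => by subst h; rfl⟩ rfl rfl
  · rw [PA.mul_ncomp _ _ hd', map_zero, if_neg (by rintro rfl; exact hd' h)]
    rfl

theorem repr_mul_basis_comp [IsScalarTower K A A] (c q : GPath G) (h : c.rng = q.src) (x : A) :
    PA.basis.repr (x * PA.basis q) (c.comp q h) = PA.basis.repr x c := by
  classical
  suffices Finsupp.lapply (c.comp q h) ∘ₗ PA.basis.repr.toLinearMap ∘ₗ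
      LinearMap.mulRight K (PA.basis q) = Finsupp.lapply c ∘ₗ PA.basis.repr.toLinearMap from
    LinearMap.congr_fun this x
  refine PA.basis.ext fun c' => ?_
  simp only [LinearMap.comp_apply, LinearMap.mulRight_apply, LinearEquiv.coe_coe,
    Finsupp.lapply_apply, Basis.repr_self, Finsupp.single_apply]
  by_cases hc' : c'.rng = q.src
  · rw [PA.mul_comp _ _ hc', Basis.repr_self, Finsupp.single_apply]
    exact if_congr ⟨comp_left_cancel, fun h => by subst h; rfl⟩ rfl rfl
  · rw [PA.mul_ncomp _ _ hc', map_zero, if_neg (by rintro rfl; exact hc' h)]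
    rfl

theorem exists_comp_eq_of_repr_basis_mul_ne_zero [SMulCommClass K A A] {q r : GPath G} {y : A}
    (hy : PA.basis.repr (PA.basis q * y) r ≠ 0) :
    ∃ (d : GPath G) (h : q.rng = d.src), q.comp d h = r := by
  classical
  by_contra! hr
  suffices Finsupp.lapply r ∘ₗ PA.basis.repr.toLinearMap ∘ₗ
      LinearMap.mulLeft K (PA.basis q) = 0 from hy (LinearMap.congr_fun this y)
  refine PA.basis.ext fun d => ?_
  simp only [LinearMap.comp_apply, LinearMap.mulLeft_apply, LinearEquiv.coe_coe,
    Finsupp.lapply_apply, LinearMap.zero_apply]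
  by_cases hd : q.rng = d.src
  · rw [PA.mul_comp _ _ hd, Basis.repr_self, Finsupp.single_apply, if_neg (hr d hd)]
  · rw [PA.mul_ncomp _ _ hd, map_zero, Finsupp.zero_apply]

theorem exists_comp_eq_of_repr_mul_basis_ne_zero [IsScalarTower K A A] {q r : GPath G} {x : A}
    (hx : PA.basis.repr (x * PA.basis q) r ≠ 0) :
    ∃ (c : GPath G) (h : c.rng = q.src), c.comp q h = r := by
  classical
  by_contra! hr
  suffices Finsupp.lapply r ∘ₗ PA.basis.repr.toLinearMap ∘ₗ
      LinearMap.mulRight K (PA.basis q) = 0 from hx (LinearMap.congr_fun this x)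
  refine PA.basis.ext fun c => ?_
  simp only [LinearMap.comp_apply, LinearMap.mulRight_apply, LinearEquiv.coe_coe,
    Finsupp.lapply_apply, LinearMap.zero_apply]
  by_cases hc : c.rng = q.src
  · rw [PA.mul_comp _ _ hc, Basis.repr_self, Finsupp.single_apply, if_neg (hr c hc)]
  · rw [PA.mul_ncomp _ _ hc, map_zero, Finsupp.zero_apply]

theorem apply_basis (hT : T ∈ centroidSet K A) (p : GPath G) :
    T (PA.basis p) = T (PA.basis (ofVertex p.src)) * PA.basis p := by
  have hp : PA.basis (ofVertex p.src) * PA.basis p = PA.basis p := PA.mul_comp _ _ rfl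
  conv_lhs => rw [← hp]
  exact (hT _ _).1

theorem eq_of_apply_ofVertex (hT : T ∈ centroidSet K A) (hT' : T' ∈ centroidSet K A)
    (h : ∀ u, T (PA.basis (ofVertex u)) = T' (PA.basis (ofVertex u))) : T = T' :=
  PA.basis.ext fun p => by rw [PA.apply_basis hT, PA.apply_basis hT', h]

theorem apply_src_mul_edge (hT : T ∈ centroidSet K A) (e : G.Edge) :
    T (PA.basis (ofVertex (G.s e))) * PA.basis (ofEdge e)
      = PA.basis (ofEdge e) * T (PA.basis (ofVertex (G.r e))) := by
  have hs : PA.basis (ofVertex (G.s e)) * PA.basis (ofEdge e) = PA.basis (ofEdge e) :=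
    PA.mul_comp _ _ rfl
  have hr : PA.basis (ofEdge e) * PA.basis (ofVertex (G.r e)) = PA.basis (ofEdge e) :=
    PA.mul_comp _ _ rfl
  rw [← (hT _ _).1, hs, ← (hT _ _).2, hr]

variable [SMulCommClass K A A] [IsScalarTower K A A]

theorem src_eq_and_rng_eq_of_repr_ne_zero (hT : T ∈ centroidSet K A) {u : G.V} {q : GPath G}
    (hq : PA.basis.repr (T (PA.basis (ofVertex u))) q ≠ 0) : q.src = u ∧ q.rng = u := by
  have hu : PA.basis (ofVertex u) * PA.basis (ofVertex u) = PA.basis (ofVertex u) :=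
    PA.mul_comp _ _ rfl
  constructor
  · rw [← hu, (hT _ _).2] at hq
    obtain ⟨d, -, rfl⟩ := PA.exists_comp_eq_of_repr_basis_mul_ne_zero hq
    exact src_comp ..
  · rw [← hu, (hT _ _).1] at hq
    obtain ⟨c, -, rfl⟩ := PA.exists_comp_eq_of_repr_mul_basis_ne_zero hq
    exact rng_comp ..

theorem repr_apply_src_eq (hT : T ∈ centroidSet K A) (e : G.Edge) {c d : GPath G}
    (hc : c.rng = (ofEdge e).src) (hd : (ofEdge e).rng = d.src)
    (h : c.comp (ofEdge e) hc = (ofEdge e).comp d hd) :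
    PA.basis.repr (T (PA.basis (ofVertex (G.s e)))) c
      = PA.basis.repr (T (PA.basis (ofVertex (G.r e)))) d := by
  rw [← PA.repr_mul_basis_comp c _ hc, PA.apply_src_mul_edge hT, h, PA.repr_basis_mul_comp]

theorem apply_src_eq_zero_iff (hT : T ∈ centroidSet K A) (e : G.Edge) :
    T (PA.basis (ofVertex (G.s e))) = 0 ↔ T (PA.basis (ofVertex (G.r e))) = 0 := by
  have key := PA.apply_src_mul_edge hT e
  constructor
  · refine fun h0 => PA.basis.repr.injective (Finsupp.ext fun d => ?_)
    simp only [map_zero, Finsupp.zero_apply]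
    by_contra hd
    have hsrc := (PA.src_eq_and_rng_eq_of_repr_ne_zero hT hd).1
    rw [← PA.repr_basis_mul_comp (ofEdge e) d hsrc.symm, ← key, h0, zero_mul, map_zero] at hd
    exact hd rfl
  · refine fun h0 => PA.basis.repr.injective (Finsupp.ext fun c => ?_)
    simp only [map_zero, Finsupp.zero_apply]
    by_contra hc
    have hrng := (PA.src_eq_and_rng_eq_of_repr_ne_zero hT hc).2
    rw [← PA.repr_mul_basis_comp c (ofEdge e) hrng, key, h0, mul_zero, map_zero] at hc
    exact hc rfl

theorem head?_edges_eq_of_repr_ne_zero (hT : T ∈ centroidSet K A) (e : G.Edge) {c : GPath G}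
    (hc : PA.basis.repr (T (PA.basis (ofVertex (G.s e)))) c ≠ 0) (hnil : c.edges ≠ []) :
    c.edges.head? = some e := by
  have hcr : c.rng = (ofEdge e).src := (PA.src_eq_and_rng_eq_of_repr_ne_zero hT hc).2
  rw [← PA.repr_mul_basis_comp c _ hcr, PA.apply_src_mul_edge hT] at hc
  obtain ⟨d, _, hdc⟩ := PA.exists_comp_eq_of_repr_basis_mul_ne_zero hc
  have hedges := congrArg edges hdc
  simp only [edges_comp, edges_ofEdge] at hedges
  rw [← List.head?_append_of_ne_nil _ hnil, ← hedges]
  rfl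

theorem getLast?_edges_eq_of_repr_ne_zero (hT : T ∈ centroidSet K A) (e : G.Edge)
    {c : GPath G} (hc : PA.basis.repr (T (PA.basis (ofVertex (G.r e)))) c ≠ 0)
    (hnil : c.edges ≠ []) : c.edges.getLast? = some e := by
  have hcs : (ofEdge e).rng = c.src := (PA.src_eq_and_rng_eq_of_repr_ne_zero hT hc).1.symm
  rw [← PA.repr_basis_mul_comp _ c hcs, ← PA.apply_src_mul_edge hT] at hc
  obtain ⟨d, _, hdc⟩ := PA.exists_comp_eq_of_repr_mul_basis_ne_zero hc
  have hedges := congrArg edges hdc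
  simp only [edges_comp, edges_ofEdge] at hedges
  rw [← List.getLast?_append_of_ne_nil [e] hnil, ← hedges]
  simp

/-- Vanishing of `T (b u)` propagates along edges, so no `T (b u)` vanishes and its support
contains a nontrivial closed path at `u`, whose first and last edges are then the only edges
leaving and entering `u`. -/
theorem isCycleGraph_of_mem_centroidSet (hconn : G.Connected) (hT : T ∈ centroidSet K A)
    (htriv : ∀ u, PA.basis.repr (T (PA.basis (ofVertex u))) (ofVertex u) = 0) (hT0 : T ≠ 0) :
    G.IsCycleGraph := by
  have hT0' : ∀ u, T (PA.basis (ofVertex u)) ≠ 0 := fun u h0 =>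
    hT0 <| PA.eq_of_apply_ofVertex hT (zero_mem (centroidSubalgebra K A)) fun v => by
      rw [LinearMap.zero_apply]
      exact (hconn.apply_eq (fun v => T (PA.basis (ofVertex v)) = 0)
        (fun e => propext (PA.apply_src_eq_zero_iff hT e)) u v).mp h0
  have hloop : ∀ u, ∃ c : GPath G, c.src = u ∧ c.rng = u ∧ c.edges ≠ [] ∧
      PA.basis.repr (T (PA.basis (ofVertex u))) c ≠ 0 := by
    intro u
    obtain ⟨c, hc⟩ : ∃ c, PA.basis.repr (T (PA.basis (ofVertex u))) c ≠ 0 :=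
      Finsupp.ne_iff.mp (PA.basis.repr.map_ne_zero_iff.mpr (hT0' u))
    obtain ⟨hsrc, hrng⟩ := PA.src_eq_and_rng_eq_of_repr_ne_zero hT hc
    refine ⟨c, hsrc, hrng, fun hnil => hc ?_, hc⟩
    rw [eq_ofVertex_of_edges_eq_nil hnil, hsrc, htriv]
  choose c hsrc hrng hnil hc using hloop
  have hs : Function.Bijective G.s := by
    refine ⟨fun e₁ e₂ h => ?_, fun u => ?_⟩
    · have h₁ := PA.head?_edges_eq_of_repr_ne_zero hT e₁ (hc _) (hnil _)
      have h₂ := PA.head?_edges_eq_of_repr_ne_zero hT e₂ (hc _) (hnil _)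
      rw [h] at h₁
      exact Option.some.inj (h₁.symm.trans h₂)
    · exact ⟨_, (src_eq_of_head?_edges (List.head?_eq_some_head (hnil u))).trans (hsrc u)⟩
  have hr : Function.Bijective G.r := by
    refine ⟨fun e₁ e₂ h => ?_, fun u => ?_⟩
    · have h₁ := PA.getLast?_edges_eq_of_repr_ne_zero hT e₁ (hc _) (hnil _)
      have h₂ := PA.getLast?_edges_eq_of_repr_ne_zero hT e₂ (hc _) (hnil _)
      rw [h] at h₁
      exact Option.some.inj (h₁.symm.trans h₂)
    · exact ⟨_, (rng_eq_of_getLast?_edges (List.getLast?_eq_some_getLast (hnil u))).trans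
        (hrng u)⟩
  obtain ⟨u⟩ : Nonempty G.V := by
    by_contra hV
    exact hT0 (PA.eq_of_apply_ofVertex hT (zero_mem (centroidSubalgebra K A))
      fun u => (hV ⟨u⟩).elim)
  exact isCycleGraph_of_bijective hconn hs hr ((hrng u).trans (hsrc u).symm)
    (by rw [length_eq_length_edges]; exact List.length_pos_iff.mpr (hnil u) |>.ne')

include PA in
theorem exists_eq_smul_id_of_not_isCycleGraph (hconn : G.Connected) (hnc : ¬ G.IsCycleGraph)
    (hT : T ∈ centroidSet K A) : ∃ k : K, T = k • LinearMap.id := by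
  obtain ⟨k, hk⟩ : ∃ k : K, ∀ u, PA.basis.repr (T (PA.basis (ofVertex u))) (ofVertex u) = k := by
    rcases isEmpty_or_nonempty G.V with hV | ⟨⟨u₀⟩⟩
    · exact ⟨0, isEmptyElim⟩
    · exact ⟨_, fun u => hconn.apply_eq (fun v => PA.basis.repr (T (PA.basis (ofVertex v)))
        (ofVertex v)) (fun e => PA.repr_apply_src_eq hT e rfl rfl rfl) u u₀⟩
  have hk_mem : T - k • LinearMap.id ∈ centroidSubalgebra K A :=
    sub_mem hT (Subalgebra.smul_mem _ (one_mem _) k)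
  refine ⟨k, sub_eq_zero.mp (not_not.mp fun hne => hnc ?_)⟩
  exact PA.isCycleGraph_of_mem_centroidSet hconn hk_mem (fun u => by simp [hk]) hne

end PathAlgebraOn

namespace DGraph.GPath

variable {G : DGraph} (hsurj : Function.Surjective G.s) (n : ℕ)

noncomputable def extend (p : GPath G) : GPath G :=
  p.comp (exists_src_eq_length_eq hsurj p.rng n).choose
    (exists_src_eq_length_eq hsurj p.rng n).choose_spec.1.symm

@[simp] theorem src_extend (p : GPath G) : (p.extend hsurj n).src = p.src := src_comp ..

@[simp] theorem length_extend (p : GPath G) : (p.extend hsurj n).length = p.length + n := by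
  rw [extend, length_comp, (exists_src_eq_length_eq hsurj p.rng n).choose_spec.2]

@[simp] theorem src_iterate_extend (k : ℕ) (p : GPath G) :
    ((extend hsurj n)^[k] p).src = p.src := by
  induction k generalizing p with
  | zero => rfl
  | succ k ih => rw [Function.iterate_succ_apply, ih, src_extend]

@[simp] theorem length_iterate_extend (k : ℕ) (p : GPath G) :
    ((extend hsurj n)^[k] p).length = p.length + k * n := by
  induction k generalizing p with
  | zero => simp
  | succ k ih => rw [Function.iterate_succ_apply, ih, length_extend]; ring

variable {n}

theorem rng_extend (hper : ∀ p : GPath G, p.rng = p.src ↔ n ∣ p.length)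
    (p : GPath G) : (p.extend hsurj n).rng = p.rng := by
  obtain ⟨hsrc, hlen⟩ := (exists_src_eq_length_eq hsurj p.rng n).choose_spec
  rw [extend, rng_comp, (hper _).mpr (by rw [hlen]), hsrc]

theorem rng_iterate_extend (hper : ∀ p : GPath G, p.rng = p.src ↔ n ∣ p.length)
    (k : ℕ) (p : GPath G) : ((extend hsurj n)^[k] p).rng = p.rng := by
  induction k generalizing p with
  | zero => rfl
  | succ k ih => rw [Function.iterate_succ_apply, ih, rng_extend hsurj hper]

theorem iterate_extend_injective (hn : 0 < n) (p : GPath G) :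
    Function.Injective fun k => (extend hsurj n)^[k] p := fun i j h =>
  Nat.eq_of_mul_eq_mul_right hn (by simpa using congrArg length h)

end DGraph.GPath

namespace PathAlgebraOn

open Polynomial

variable {K : Type} [Field K] {G : DGraph} {A : Type} [NonUnitalRing A] [Module K A]
  (PA : PathAlgebraOn K G A) (hsurj : Function.Surjective G.s) (n : ℕ) {T T' : A →ₗ[K] A}

/-- On a cycle of length `n` this is multiplication by the sum of the loops of length `n`, the
generator of the centroid. -/
noncomputable def shift : Module.End K A :=
  PA.basis.constr K fun p => PA.basis (p.extend hsurj n)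

theorem shift_basis (p : GPath G) : PA.shift hsurj n (PA.basis p) = PA.basis (p.extend hsurj n) :=
  PA.basis.constr_basis K _ p

theorem pow_shift_basis (k : ℕ) (p : GPath G) :
    (PA.shift hsurj n ^ k) (PA.basis p) = PA.basis ((extend hsurj n)^[k] p) := by
  induction k generalizing p with
  | zero => rfl
  | succ k ih => rw [pow_succ, Module.End.mul_apply, shift_basis, ih, Function.iterate_succ_apply]

variable {n}

theorem repr_aeval_shift_basis (hn : 0 < n) (f : K[X]) (p : GPath G) (k : ℕ) :
    PA.basis.repr (aeval (PA.shift hsurj n) f (PA.basis p)) ((extend hsurj n)^[k] p)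
      = f.coeff k := by
  classical
  rw [aeval_eq_sum_range, LinearMap.sum_apply, map_sum, Finsupp.finsetSum_apply]
  simp only [LinearMap.smul_apply, pow_shift_basis, map_smul, Basis.repr_self,
    Finsupp.smul_apply, Finsupp.single_apply, (iterate_extend_injective hsurj hn p).eq_iff,
    smul_eq_mul, mul_ite, mul_one, mul_zero, Finset.sum_ite_eq', Finset.mem_range]
  split_ifs with hk
  · rfl
  · exact (coeff_eq_zero_of_natDegree_lt (by omega)).symm

theorem aeval_shift_injective (hn : 0 < n) [Nonempty G.V] :
    Function.Injective (aeval (R := K) (PA.shift hsurj n)) := by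
  obtain ⟨u⟩ := ‹Nonempty G.V›
  intro f g hfg
  ext k
  rw [← PA.repr_aeval_shift_basis hsurj hn f (ofVertex u), hfg, PA.repr_aeval_shift_basis hsurj hn]

variable [SMulCommClass K A A] [IsScalarTower K A A]

theorem shift_mem_centroidSet (hinj : Function.Injective G.s)
    (hper : ∀ p : GPath G, p.rng = p.src ↔ n ∣ p.length) :
    PA.shift hsurj n ∈ centroidSet K A := by
  refine mem_centroidSet_of_basis PA.basis fun p q => ?_
  by_cases h : p.rng = q.src
  · have hl : (p.extend hsurj n).rng = q.src := (rng_extend hsurj hper p).trans h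
    have hr : p.rng = (q.extend hsurj n).src := h.trans (src_extend ..).symm
    rw [PA.mul_comp _ _ h, shift_basis, shift_basis, shift_basis, PA.mul_comp _ _ hl,
      PA.mul_comp _ _ hr]
    constructor <;> congr 1 <;> apply eq_of_src_eq_of_length_eq hinj <;> simp <;> omega
  · rw [PA.mul_ncomp _ _ h, map_zero, shift_basis, shift_basis,
      PA.mul_ncomp _ _ (by rwa [rng_extend hsurj hper]), PA.mul_ncomp _ _ (by rwa [src_extend])]
    exact ⟨rfl, rfl⟩

theorem aeval_shift_mem_centroidSet (hinj : Function.Injective G.s)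
    (hper : ∀ p : GPath G, p.rng = p.src ↔ n ∣ p.length) (f : K[X]) :
    aeval (PA.shift hsurj n) f ∈ centroidSet K A :=
  Algebra.adjoin_le (S := centroidSubalgebra K A)
    (Set.singleton_subset_iff.mpr (PA.shift_mem_centroidSet hsurj hinj hper))
    (aeval_mem_adjoin_singleton K _)

/-- The iterated extensions of `ofVertex u` are the only closed paths at `u`. -/
theorem eq_of_repr_iterate_extend (hinj : Function.Injective G.s)
    (hper : ∀ p : GPath G, p.rng = p.src ↔ n ∣ p.length)
    (hT : T ∈ centroidSet K A) (hT' : T' ∈ centroidSet K A)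
    (h : ∀ u k, PA.basis.repr (T (PA.basis (ofVertex u))) ((extend hsurj n)^[k] (ofVertex u))
      = PA.basis.repr (T' (PA.basis (ofVertex u))) ((extend hsurj n)^[k] (ofVertex u))) :
    T = T' := by
  refine PA.eq_of_apply_ofVertex hT hT' fun u => PA.basis.repr.injective (Finsupp.ext fun q => ?_)
  by_cases hq : q.src = u ∧ q.rng = u
  · have hloop : q = (extend hsurj n)^[q.length / n] (ofVertex u) := by
      refine eq_of_src_eq_of_length_eq hinj (by simp [hq.1]) ?_
      simp [Nat.div_mul_cancel ((hper q).mp (hq.2.trans hq.1.symm))]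
    rw [hloop]
    exact h u _
  · rw [not_ne_iff.mp (mt (PA.src_eq_and_rng_eq_of_repr_ne_zero hT) hq),
      not_ne_iff.mp (mt (PA.src_eq_and_rng_eq_of_repr_ne_zero hT') hq)]

/-- The coefficient of `T (b u)` at the `k`-th loop does not depend on `u`, so it defines a
polynomial `f` with `T = f(shift)`. -/
theorem exists_aeval_shift_eq (hconn : G.Connected) (hinj : Function.Injective G.s) (hn : 0 < n)
    (hper : ∀ p : GPath G, p.rng = p.src ↔ n ∣ p.length) [Nonempty G.V]
    (hT : T ∈ centroidSet K A) : ∃ f : K[X], aeval (PA.shift hsurj n) f = T := by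
  obtain ⟨u₀⟩ := ‹Nonempty G.V›
  have hconst : ∀ u k, PA.basis.repr (T (PA.basis (ofVertex u))) ((extend hsurj n)^[k] (ofVertex u))
      = PA.basis.repr (T (PA.basis (ofVertex u₀))) ((extend hsurj n)^[k] (ofVertex u₀)) :=
    fun u k => hconn.apply_eq
      (fun v => PA.basis.repr (T (PA.basis (ofVertex v))) ((extend hsurj n)^[k] (ofVertex v)))
      (fun e => PA.repr_apply_src_eq hT e (by rw [rng_iterate_extend hsurj hper]; rfl)
        (by rw [src_iterate_extend]; rfl)
        (eq_of_src_eq_of_length_eq hinj (by simp) (by simp [add_comm]))) u u₀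
  let f : K[X] := ofFinsupp (AddMonoidAlgebra.ofCoeff
    (Finsupp.comapDomain (fun k => (extend hsurj n)^[k] (ofVertex u₀))
      (PA.basis.repr (T (PA.basis (ofVertex u₀))))
      (iterate_extend_injective hsurj hn _).injOn))
  refine ⟨f, PA.eq_of_repr_iterate_extend hsurj hinj hper
    (PA.aeval_shift_mem_centroidSet hsurj hinj hper f) hT fun u k => ?_⟩
  rw [PA.repr_aeval_shift_basis _ hn, hconst]
  simp [f]

theorem range_aeval_shift (hconn : G.Connected) (hinj : Function.Injective G.s) (hn : 0 < n)
    (hper : ∀ p : GPath G, p.rng = p.src ↔ n ∣ p.length) [Nonempty G.V] :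
    Set.range (aeval (R := K) (PA.shift hsurj n)) = centroidSet K A :=
  (Set.range_subset_iff.mpr (PA.aeval_shift_mem_centroidSet hsurj hinj hper)).antisymm
    fun _ hT => PA.exists_aeval_shift_eq hsurj hconn hinj hn hper hT

end PathAlgebraOn

/-- for a connected graph `E`, the centroid of `KE` is `K[x]` if `E` is a
cycle, and `K·Id` otherwise. -/
theorem stmt6 (K : Type) [Field K] (G : DGraph)
    (A : Type) [NonUnitalRing A] [Module K A] [SMulCommClass K A A] [IsScalarTower K A A]
    (PA : PathAlgebraOn K G A) (hconn : G.Connected) :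
    (G.IsCycleGraph →
      ∃ Φ : Polynomial K →ₗ[K] (A →ₗ[K] A),
        Function.Injective Φ ∧
        (∀ p q : Polynomial K, Φ (p * q) = Φ p ∘ₗ Φ q) ∧
        Φ 1 = LinearMap.id ∧
        Set.range Φ = centroidSet K A) ∧
    (¬ G.IsCycleGraph →
      ∀ T ∈ centroidSet K A, ∃ k : K, T = k • (LinearMap.id : A →ₗ[K] A)) := by
  refine ⟨fun hcyc => ?_, fun hnc T hT => PA.exists_eq_smul_id_of_not_isCycleGraph hconn hnc hT⟩
  obtain ⟨n, hn, hper⟩ := hcyc.exists_rng_eq_src_iff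
  have := hcyc.nonempty
  obtain ⟨hinj, hsurj⟩ := hcyc.bijective_s
  exact ⟨(Polynomial.aeval (PA.shift hsurj n)).toLinearMap, PA.aeval_shift_injective hsurj hn,
    map_mul (Polynomial.aeval (PA.shift hsurj n)), map_one (Polynomial.aeval (PA.shift hsurj n)),
    PA.range_aeval_shift hsurj hconn hinj hn hper⟩
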